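/- arXiv:1305.4139 — 5 statements merged into one kernel-verified Lean document; each statement's English description precedes it below -/
import Mathlib

section
/- Let S be a finite 2-group such that for every x in S, the centralizer C_S(x) equals the normalizer N_S(⟨x⟩). Then any two involutions of S commute, i.e., the subgroup generated by all involutions of S is elementary abelian. -/
/-! If `u`, `v` are involutions then `u` inverts `t = u * v`, so `u` normalizes `⟨t⟩`. The
hypothesis turns this into `u` centralizing `t`, and commuting with `u * v` is commuting with `v`. -/

namespace Subgroup

variable {G : Type*} [Group G]

theorem mem_normalizer_zpowers_of_conj_eq_inv {g x : G} (h : g * x * g⁻¹ = x⁻¹) :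
    g ∈ normalizer (zpowers x : Set G) := by
  rw [mem_normalizer_iff_map_conj_eq, MonoidHom.map_zpowers]
  simp [MulAut.conj_apply, h]

end Subgroup

section

variable {G : Type*} [Group G]

theorem conj_mul_eq_inv_of_mul_self_eq_one {u v : G} (hu : u * u = 1) (hv : v * v = 1) :
    u * (u * v) * u⁻¹ = (u * v)⁻¹ := by
  rw [mul_inv_rev, inv_eq_of_mul_eq_one_right hu, inv_eq_of_mul_eq_one_right hv,
    ← mul_assoc, hu, one_mul]

theorem Commute.of_mul_right_self {u v : G} (h : Commute u (u * v)) : Commute u v := by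
  simpa using (Commute.refl u).inv_right.mul_right h

theorem mul_self_eq_one_of_orderOf_eq_two {u : G} (hu : orderOf u = 2) : u * u = 1 := by
  rw [← sq, ← hu, pow_orderOf_eq_one]

end

theorem involutions_commute_of_normalizer_eq_centralizer_general
    (S : Type*) [Group S]
    (h : ∀ x : S, Subgroup.normalizer (Subgroup.zpowers x : Set S) = Subgroup.centralizer {x}) :
    ∀ u v : S, orderOf u = 2 → orderOf v = 2 → Commute u v := by
  intro u v hu hv
  have hinv := conj_mul_eq_inv_of_mul_self_eq_one
    (mul_self_eq_one_of_orderOf_eq_two hu) (mul_self_eq_one_of_orderOf_eq_two hv)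
  have hcent : u ∈ Subgroup.centralizer {u * v} :=
    h (u * v) ▸ Subgroup.mem_normalizer_zpowers_of_conj_eq_inv hinv
  exact Commute.of_mul_right_self (Subgroup.mem_centralizer_singleton_iff.mp hcent)

/-- In a finite 2-group `S` with `N_S(⟨x⟩) = C_S(x)` for all `x`, any two
involutions commute. -/
theorem involutions_commute_of_normalizer_eq_centralizer
    (S : Type*) [Group S] [Finite S] (hS : IsPGroup 2 S)
    (h : ∀ x : S, Subgroup.normalizer (Subgroup.zpowers x : Set S) = Subgroup.centralizer {x}) :
    ∀ u v : S, orderOf u = 2 → orderOf v = 2 → Commute u v :=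
  involutions_commute_of_normalizer_eq_centralizer_general S h
end

section
/- Let S be a finite 2-group in which every element x satisfies [x, N_S(⟨x⟩)] = 1, i.e., N_S(⟨x⟩) = C_S(x) for all x. Then Ω₁(S), the subgroup generated by all involutions of S, is elementary abelian. -/
/-!
Two involutions `x, y` generate a dihedral group in which `y` inverts `x * y`. So `y` normalizes
`⟨x * y⟩`, hence centralizes `x * y` by hypothesis, and then `y * x * y = x`: any two involutions
commute. A group generated by pairwise commuting involutions is elementary abelian.
-/

open Subgroup

theorem Subgroup.mem_normalizer_zpowers_of_conj_eq_inv_s4 {G : Type*} [Group G] {g x : G}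
    (h : g * x * g⁻¹ = x⁻¹) : g ∈ normalizer (zpowers x : Set G) := by
  rw [mem_normalizer_iff_map_conj_eq, MonoidHom.map_zpowers]
  exact (congrArg zpowers h).trans zpowers_inv

theorem Subgroup.commute_of_mem_closure {G : Type*} [Group G] {s : Set G}
    (hs : ∀ x ∈ s, ∀ y ∈ s, Commute x y) {a b : G} (ha : a ∈ closure s) (hb : b ∈ closure s) :
    Commute a b :=
  Set.centralizer_centralizer_comm_of_comm hs a (closure_le_centralizer_centralizer s ha) b
    (closure_le_centralizer_centralizer s hb)

theorem Subgroup.pow_eq_one_of_mem_closure {G : Type*} [Group G] {s : Set G} {n : ℕ}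
    (hcomm : ∀ x ∈ s, ∀ y ∈ s, Commute x y) (hs : ∀ x ∈ s, x ^ n = 1) {a : G}
    (ha : a ∈ closure s) : a ^ n = 1 := by
  induction ha using closure_induction with
  | mem x hx => exact hs x hx
  | one => exact one_pow n
  | mul x y hx hy hxn hyn =>
    rw [(commute_of_mem_closure hcomm hx hy).mul_pow, hxn, hyn, one_mul]
  | inv x _ hxn => rw [inv_pow, hxn, inv_one]

theorem conj_mul_eq_inv_of_sq_eq_one {G : Type*} [Group G] {x y : G} (hx : x ^ 2 = 1)
    (hy : y ^ 2 = 1) : y * (x * y) * y⁻¹ = (x * y)⁻¹ := by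
  have hx' : x⁻¹ = x := inv_eq_of_mul_eq_one_right (pow_two x ▸ hx)
  have hy' : y⁻¹ = y := inv_eq_of_mul_eq_one_right (pow_two y ▸ hy)
  rw [← mul_assoc, mul_inv_cancel_right, mul_inv_rev, hx', hy']

theorem commute_of_sq_eq_one_of_normalizer_eq_centralizer {G : Type*} [Group G]
    (h : ∀ x : G, normalizer (zpowers x : Set G) = centralizer {x})
    {x y : G} (hx : x ^ 2 = 1) (hy : y ^ 2 = 1) : Commute x y := by
  have hcomm := mem_normalizer_zpowers_of_conj_eq_inv_s4 (conj_mul_eq_inv_of_sq_eq_one hx hy)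
  rw [h, mem_centralizer_singleton_iff] at hcomm
  have hyy : y * y = 1 := pow_two y ▸ hy
  rw [mul_assoc, hyy, mul_one, ← mul_assoc] at hcomm
  calc x * y = y * x * y * y := by rw [hcomm]
    _ = y * x := by rw [mul_assoc (y * x), hyy, mul_one]

theorem omega1_elementary_abelian_general
    (S : Type*) [Group S]
    (h : ∀ x : S, Subgroup.normalizer (Subgroup.zpowers x : Set S) = Subgroup.centralizer {x}) :
    (∀ a ∈ Subgroup.closure {x : S | x ^ 2 = 1}, a ^ 2 = 1) ∧
    (∀ a ∈ Subgroup.closure {x : S | x ^ 2 = 1},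
      ∀ b ∈ Subgroup.closure {x : S | x ^ 2 = 1}, Commute a b) := by
  have hinvol : ∀ x ∈ {x : S | x ^ 2 = 1}, ∀ y ∈ {x : S | x ^ 2 = 1}, Commute x y :=
    fun _ hx _ hy => commute_of_sq_eq_one_of_normalizer_eq_centralizer h hx hy
  exact ⟨fun _ ha => pow_eq_one_of_mem_closure hinvol (fun _ hx => hx) ha,
    fun _ ha _ hb => commute_of_mem_closure hinvol ha hb⟩

/-- In a finite 2-group `S` with `N_S(⟨x⟩) = C_S(x)` for all `x`,
`Ω₁(S)`, the subgroup generated by involutions, is elementary abelian. -/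
theorem omega1_elementary_abelian
    (S : Type*) [Group S] [Finite S] (hS : IsPGroup 2 S)
    (h : ∀ x : S, Subgroup.normalizer (Subgroup.zpowers x : Set S) = Subgroup.centralizer {x}) :
    (∀ a ∈ Subgroup.closure {x : S | x ^ 2 = 1}, a ^ 2 = 1) ∧
    (∀ a ∈ Subgroup.closure {x : S | x ^ 2 = 1},
      ∀ b ∈ Subgroup.closure {x : S | x ^ 2 = 1}, Commute a b) :=
  omega1_elementary_abelian_general S h
end

section
/- Let G be a finite group, p a prime, S a Sylow p-subgroup of G, and U an abelian subgroup of S that is strongly closed in S with respect to G. Then N_G(U) controls fusion in S: for all P ≤ S and g ∈ G with P^g ≤ S, there exist c ∈ C_G(P^g) and n ∈ N_G(U) such that conjugation by g agrees on P with conjugation by nc, that is, x^g = x^{nc} for all x ∈ P. -/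
open Subgroup Pointwise

set_option linter.unusedSectionVars false
namespace CF

variable {G : Type*} [Group G]

def cnj (g : G) (H : Subgroup G) : Subgroup G := H.map (MulAut.conj g).toMonoidHom

lemma mem_cnj {g x : G} {H : Subgroup G} : x ∈ cnj g H ↔ g⁻¹ * x * g ∈ H := by
  unfold cnj; rw [Subgroup.mem_map_equiv]; simp [MulAut.conj]

lemma cnj_cnj (a b : G) (H : Subgroup G) : cnj a (cnj b H) = cnj (a * b) H := by
  ext x
  simp only [mem_cnj]
  have : b⁻¹ * (a⁻¹ * x * a) * b = (a*b)⁻¹ * x * (a*b) := by group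
  rw [this]

lemma cnj_one (H : Subgroup G) : cnj 1 H = H := by ext x; simp [mem_cnj]

lemma cnj_mono {H K : Subgroup G} (g : G) (h : H ≤ K) : cnj g H ≤ cnj g K := by
  intro x hx; rw [mem_cnj] at *; exact h hx

lemma cnj_le_iff {H K : Subgroup G} {g : G} : cnj g H ≤ K ↔ H ≤ cnj g⁻¹ K := by
  constructor
  · intro h
    have := cnj_mono g⁻¹ h
    rwa [cnj_cnj, inv_mul_cancel, cnj_one] at this
  · intro h
    have := cnj_mono g h
    rwa [cnj_cnj, mul_inv_cancel, cnj_one] at this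

lemma cnj_inj {H K : Subgroup G} (g : G) (h : cnj g H = cnj g K) : H = K := by
  have h1 := congrArg (cnj g⁻¹) h
  rwa [cnj_cnj, cnj_cnj, inv_mul_cancel, cnj_one, cnj_one] at h1

lemma cnj_inf (g : G) (H K : Subgroup G) : cnj g (H ⊓ K) = cnj g H ⊓ cnj g K := by
  ext x; simp [mem_cnj, Subgroup.mem_inf]

lemma cnj_sup (g : G) (H K : Subgroup G) : cnj g (H ⊔ K) = cnj g H ⊔ cnj g K :=
  Subgroup.map_sup _ _ _

lemma card_cnj (g : G) (H : Subgroup G) : Nat.card (cnj g H) = Nat.card H :=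
  (Nat.card_congr (Subgroup.equivMapOfInjective H _ (MulAut.conj g).injective).toEquiv).symm

lemma isPGroup_cnj {p : ℕ} {H : Subgroup G} (h : IsPGroup p H) (g : G) :
    IsPGroup p (cnj g H) := h.map _

lemma eq_of_le_of_card_eq {H K : Subgroup G} [Finite K] (hle : H ≤ K)
    (h : Nat.card H = Nat.card K) : H = K :=
  Subgroup.eq_of_le_of_card_ge hle h.ge

lemma mem_cnj' {g x : G} {H : Subgroup G} : x ∈ cnj g H ↔ ∃ y ∈ H, x = g * y * g⁻¹ := by
  rw [mem_cnj]
  constructor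
  · intro h; exact ⟨_, h, by group⟩
  · rintro ⟨y, hy, rfl⟩
    have : g⁻¹ * (g * y * g⁻¹) * g = y := by group
    rwa [this]

lemma cnj_eq_of_mem_normalizer {x : G} {H : Subgroup G} (h : x ∈ Subgroup.normalizer (H : Set G)) :
    cnj x H = H := by
  rw [Subgroup.mem_normalizer_iff] at h
  ext y
  rw [mem_cnj]
  have e : x * (x⁻¹ * y * x) * x⁻¹ = y := by group
  have := h (x⁻¹ * y * x)
  rw [e] at this
  exact this

lemma cnj_eq_of_mem_centralizer {x : G} {Q : Subgroup G}
    (h : x ∈ Subgroup.centralizer (Q : Set G)) : cnj x Q = Q := by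
  ext y
  rw [mem_cnj]
  rw [Subgroup.mem_centralizer_iff] at h
  constructor
  · intro hy
    have hc := h _ hy
    -- from x⁻¹ y x ∈ Q: (x⁻¹yx) x = x (x⁻¹yx) ⇒ x⁻¹ y x ... gives y = x (x⁻¹yx) x⁻¹ = (x⁻¹yx) ✓
    have : y = x⁻¹ * y * x := by
      have := hc
      calc y = x * (x⁻¹*y*x) * x⁻¹ := by group
        _ = (x⁻¹*y*x) * x * x⁻¹ := by rw [hc]
        _ = x⁻¹ * y * x := by group
    rwa [← this] at hy
  · intro hy
    have hc := h _ hy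
    have : x⁻¹ * y * x = y := by
      calc x⁻¹ * y * x = x⁻¹ * (y * x) := by group
        _ = x⁻¹ * (x * y) := by rw [hc]
        _ = y := by group
    rwa [this]


section SCtx

variable [Finite G] {S A : Subgroup G}
variable (hsc : ∀ u ∈ A, ∀ g : G, g⁻¹ * u * g ∈ S → g⁻¹ * u * g ∈ A)

include hsc

/-- strong closure, transported to arbitrary conjugates -/
lemma SCmem {x v w : G} (hxA : x ∈ cnj v A) (hxS : x ∈ cnj w S) : x ∈ cnj w A := by
  rw [mem_cnj'] at hxA
  obtain ⟨a, ha, rfl⟩ := hxA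
  rw [mem_cnj] at hxS ⊢
  have e : w⁻¹ * (v * a * v⁻¹) * w = (v⁻¹*w)⁻¹ * a * (v⁻¹*w) := by group
  rw [e] at hxS ⊢
  exact hsc a ha _ hxS

/-- weak closure -/
lemma LWC {v w : G} (h : cnj v A ≤ cnj w S) : cnj v A = cnj w A := by
  have hle : cnj v A ≤ cnj w A := fun x hx => SCmem hsc hx (h hx)
  exact eq_of_le_of_card_eq hle (by rw [card_cnj, card_cnj])

lemma LWC1 {w : G} (h : A ≤ cnj w S) : cnj w A = A := by
  have h1 : cnj (1:G) A ≤ cnj w S := by rwa [cnj_one]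
  have := LWC hsc h1
  rw [cnj_one] at this
  exact this.symm

/-- conjugates of `A` are normal in the corresponding conjugate of `S` -/
lemma A_norm (hAS : A ≤ S) {x w : G} (hx : x ∈ cnj w S) :
    cnj x (cnj w A) = cnj w A := by
  have h1 : cnj (x*w) A ≤ cnj w S := by
    rw [← cnj_cnj]
    calc cnj x (cnj w A) ≤ cnj x (cnj w S) := cnj_mono _ (cnj_mono _ hAS)
      _ = cnj w S := cnj_eq_of_mem_normalizer (Subgroup.le_normalizer hx)
  rw [cnj_cnj]
  exact LWC hsc h1

end SCtx


/-- In a finite `p`-group `P` (as a subgroup of `G`), if `A'` is normalized by all of `P`,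
`A' ≤ P`, `Q ≤ P` and `A' ⊄ Q`, then some element of `A'` outside `Q` normalizes `Q`. -/
lemma PA {p : ℕ} [Fact p.Prime] [Finite G] {P A' Q : Subgroup G} (hP : IsPGroup p P)
    (hA : A' ≤ P) (hQ : Q ≤ P) (hnorm : ∀ x ∈ P, cnj x A' = A') (hn : ¬ A' ≤ Q) :
    ∃ w : G, w ∈ A' ∧ w ∉ Q ∧ w ∈ (Subgroup.normalizer (Q : Set G)) := by
  set K := A' ⊔ Q with hK
  have hA'K : A' ≤ K := le_sup_left
  have hQK : Q ≤ K := le_sup_right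
  have hKP : K ≤ P := sup_le hA hQ
  have hpK : IsPGroup p K := hP.to_le hKP
  haveI : Group.IsNilpotent ↥K := hpK.isNilpotent
  have NC : NormalizerCondition ↥K := normalizerCondition_of_isNilpotent
  obtain ⟨a0, ha0A, ha0Q⟩ := SetLike.not_le_iff_exists.mp hn
  have hQ'lt : Q.subgroupOf K < ⊤ := by
    rw [lt_top_iff_ne_top]
    intro h
    have : (⟨a0, hA'K ha0A⟩ : ↥K) ∈ Q.subgroupOf K := h ▸ Subgroup.mem_top _
    exact ha0Q (Subgroup.mem_subgroupOf.mp this)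
  have hlt2 := NC _ hQ'lt
  obtain ⟨xt, hxtN, hxtQ⟩ := SetLike.exists_of_lt hlt2
  have hxnorm : (xt : G) ∈ (Subgroup.normalizer (Q : Set G)) := by
    rw [Subgroup.mem_normalizer_iff]
    rw [Subgroup.mem_normalizer_iff] at hxtN
    intro h
    constructor
    · intro hh
      have h1 : (⟨h, hQK hh⟩ : ↥K) ∈ Q.subgroupOf K := Subgroup.mem_subgroupOf.mpr hh
      have h2 := (hxtN _).mp h1
      have h3 := Subgroup.mem_subgroupOf.mp h2
      simpa using h3
    · intro hh
      have hhK : h ∈ K := by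
        have h1 : (xt : G)⁻¹ * ((xt : G) * h * (xt : G)⁻¹) * (xt : G) ∈ K :=
          mul_mem (mul_mem (inv_mem xt.2) (hQK hh)) xt.2
        have e : (xt : G)⁻¹ * ((xt : G) * h * (xt : G)⁻¹) * (xt : G) = h := by group
        rwa [e] at h1
      have h1 : xt * ⟨h, hhK⟩ * xt⁻¹ ∈ Q.subgroupOf K := by
        rw [Subgroup.mem_subgroupOf]
        simpa using hh
      have h2 := (hxtN ⟨h, hhK⟩).mpr h1
      exact Subgroup.mem_subgroupOf.mp h2
  haveI hA''n : (A'.subgroupOf K).Normal := by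
    constructor
    intro nt hnt gt
    rw [Subgroup.mem_subgroupOf] at hnt ⊢
    have := hnorm (gt : G) (hKP gt.2)
    rw [← this, mem_cnj']
    exact ⟨(nt : G), hnt, by simp⟩
  have htop : Q.subgroupOf K ⊔ A'.subgroupOf K = ⊤ := by
    rw [← Subgroup.subgroupOf_sup hQK hA'K, sup_comm, ← hK, Subgroup.subgroupOf_self]
  have hmem : xt ∈ (Q.subgroupOf K : Set ↥K) * (A'.subgroupOf K : Set ↥K) := by
    rw [← Subgroup.mul_normal]
    rw [htop]
    trivial
  obtain ⟨qt, hqt, at', hat, hqa⟩ := hmem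
  refine ⟨(at' : G), Subgroup.mem_subgroupOf.mp hat, ?_, ?_⟩
  · intro hw
    apply hxtQ
    rw [Subgroup.mem_subgroupOf]
    have : (xt : G) = (qt : G) * (at' : G) := by rw [← hqa]; rfl
    rw [this]
    exact mul_mem (Subgroup.mem_subgroupOf.mp hqt) hw
  · have : (at' : G) = (qt : G)⁻¹ * (xt : G) := by
      rw [← hqa]; push_cast; group
    rw [this]
    exact mul_mem (inv_mem (Subgroup.le_normalizer (Subgroup.mem_subgroupOf.mp hqt))) hxnorm


lemma cnj_normal {Q : Subgroup G} (hQn : Q.Normal) (g : G) : cnj g Q = Q := by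
  ext x
  rw [mem_cnj]
  constructor
  · intro h
    have := hQn.conj_mem _ h g
    have e : g * (g⁻¹ * x * g) * g⁻¹ = x := by group
    rwa [e] at this
  · intro h
    have := hQn.conj_mem _ h g⁻¹
    rwa [inv_inv] at this

lemma cnj_fix_inv {x : G} {H : Subgroup G} (h : cnj x H = H) : cnj x⁻¹ H = H := by
  have := congrArg (cnj x⁻¹) h
  rw [cnj_cnj, inv_mul_cancel, cnj_one] at this
  exact this.symm

lemma centralizer_normal_of_invariant {Q : Subgroup G} (h : ∀ g, cnj g Q = Q) :
    (Subgroup.centralizer (Q : Set G)).Normal := by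
  constructor
  intro n hn g
  rw [Subgroup.mem_centralizer_iff] at hn ⊢
  intro z hz
  have hz' : g⁻¹ * z * g ∈ Q := by
    rw [← h g] at hz
    rw [SetLike.mem_coe, mem_cnj] at hz
    exact hz
  have hcomm := hn _ hz'
  calc z * (g * n * g⁻¹) = g * ((g⁻¹ * z * g) * n) * g⁻¹ := by group
    _ = g * (n * (g⁻¹ * z * g)) * g⁻¹ := by rw [hcomm]
    _ = (g * n * g⁻¹) * z := by group


section Core

variable [Finite G] {p : ℕ} [Fact p.Prime] {S : Sylow p G} {A : Subgroup G}

/-- The case of a normal `Q`: `G = N_G(A)·C_G(Q)`, phrased as: every conjugate of `A`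
is a `C_G(Q)`-conjugate. -/
lemma CORE (hAS : A ≤ S) (hab : ∀ u ∈ A, ∀ v ∈ A, Commute u v)
    (hsc : ∀ u ∈ A, ∀ g : G, g⁻¹ * u * g ∈ (S : Subgroup G) → g⁻¹ * u * g ∈ A)
    {Q : Subgroup G} (hQn : Q.Normal) (hQS : Q ≤ (S : Subgroup G)) (g : G) :
    ∃ c ∈ Subgroup.centralizer (Q : Set G), cnj g A = cnj c A := by
  classical
  -- Q is in every conjugate of S
  have hQall : ∀ x : G, Q ≤ cnj x (S : Subgroup G) := by
    intro x
    rw [← cnj_normal hQn x]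
    exact cnj_mono x hQS
  set QA := A ⊓ Q with hQA
  -- QA is invariant under all conjugations
  have hQAinv : ∀ x : G, cnj x QA = QA := by
    intro x
    have hle : cnj x QA ≤ QA := by
      intro y hy
      rw [hQA, cnj_inf, Subgroup.mem_inf, cnj_normal hQn] at hy
      refine Subgroup.mem_inf.mpr ⟨?_, hy.2⟩
      have hyS : y ∈ cnj (1:G) (S : Subgroup G) := by
        rw [cnj_one]; exact hQS hy.2
      have := SCmem hsc hy.1 hyS
      rwa [cnj_one] at this
    exact eq_of_le_of_card_eq hle (by rw [card_cnj])
  -- W := normal closure of A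
  set W := Subgroup.normalClosure (A : Set G) with hW
  haveI hWn : W.Normal := Subgroup.normalClosure_normal
  have hAW : A ≤ W := Subgroup.le_normalClosure
  -- A (and its conjugates) normalized by S (and corresponding conjugates)
  have hAnorm1 : ∀ s ∈ (S : Subgroup G), cnj s A = A := by
    intro s hs
    have h0 : s ∈ cnj (1:G) (S : Subgroup G) := by rwa [cnj_one]
    have := A_norm hsc hAS h0
    rwa [cnj_one] at this
  have hmemA : ∀ s ∈ (S : Subgroup G), ∀ a ∈ A, s * a * s⁻¹ ∈ A := by
    intro s hs a ha
    rw [← hAnorm1 s hs, mem_cnj']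
    exact ⟨a, ha, rfl⟩
  -- W centralizes QA
  have hWcentQA : W ≤ Subgroup.centralizer (QA : Set G) := by
    haveI := centralizer_normal_of_invariant (Q := QA) hQAinv
    apply Subgroup.normalClosure_le_normal
    intro a ha
    rw [SetLike.mem_coe, Subgroup.mem_centralizer_iff]
    intro z hz
    rw [SetLike.mem_coe, hQA, Subgroup.mem_inf] at hz
    exact (hab a ha z hz.1).symm
  -- the stability subgroup
  set KQ : Subgroup G :=
    { carrier := {x : G | ∀ q ∈ Q, q⁻¹ * (x⁻¹ * q * x) ∈ QA}
      one_mem' := by intro q hq; simpa using one_mem QA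
      mul_mem' := by
        intro x y hx hy
        intro q hq
        have hu := hx q hq
        have hv := hy q hq
        have hub : y⁻¹ * (q⁻¹ * (x⁻¹ * q * x)) * y ∈ QA := by
          rw [← hQAinv y⁻¹, mem_cnj']
          exact ⟨_, hu, by group⟩
        have e : q⁻¹ * ((x * y)⁻¹ * q * (x * y)) =
            (q⁻¹ * (y⁻¹ * q * y)) * (y⁻¹ * (q⁻¹ * (x⁻¹ * q * x)) * y) := by group
        rw [e]
        exact mul_mem hv hub
      inv_mem' := by
        intro x hx
        intro q hq
        have hq' : x * q * x⁻¹ ∈ Q := by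
          have := hQn.conj_mem q hq x
          exact this
        have h1 := hx _ hq'
        have e1 : x⁻¹ * (x * q * x⁻¹) * x = q := by group
        rw [e1] at h1
        have h2 := inv_mem h1
        have e2 : q⁻¹ * (x⁻¹⁻¹ * q * x⁻¹) = ((x * q * x⁻¹)⁻¹ * q)⁻¹ := by group
        rw [e2]
        exact h2 } with hKQdef
  have hKQmem : ∀ x : G, x ∈ KQ ↔ ∀ q ∈ Q, q⁻¹ * (x⁻¹ * q * x) ∈ QA := fun x => Iff.rfl
  haveI hKQn : KQ.Normal := by
    constructor
    intro n hn g
    rw [hKQmem] at hn ⊢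
    intro q hq
    have hq' : g⁻¹ * q * g ∈ Q := by
      have := hQn.conj_mem q hq g⁻¹
      rwa [inv_inv] at this
    have h1 := hn _ hq'
    have h2 : g * ((g⁻¹ * q * g)⁻¹ * (n⁻¹ * (g⁻¹ * q * g) * n)) * g⁻¹ ∈ QA := by
      rw [← hQAinv g, mem_cnj']
      exact ⟨_, h1, rfl⟩
    have e : q⁻¹ * ((g * n * g⁻¹)⁻¹ * q * (g * n * g⁻¹)) =
        g * ((g⁻¹ * q * g)⁻¹ * (n⁻¹ * (g⁻¹ * q * g) * n)) * g⁻¹ := by group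
    rw [e]
    exact h2
  have hWKQ : W ≤ KQ := by
    apply Subgroup.normalClosure_le_normal
    intro a ha
    rw [SetLike.mem_coe, hKQmem]
    intro q hq
    have hQpart : q⁻¹ * (a⁻¹ * q * a) ∈ Q := by
      have h1 : a⁻¹ * q * a ∈ Q := by
        have := hQn.conj_mem q hq a⁻¹
        rwa [inv_inv] at this
      exact mul_mem (inv_mem hq) h1
    have hApart : q⁻¹ * (a⁻¹ * q * a) ∈ A := by
      have h1 : q⁻¹ * a⁻¹ * q ∈ A := by
        have := hmemA q⁻¹ (inv_mem (hQS hq)) a⁻¹ (inv_mem ha)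
        rwa [inv_inv] at this
      have e : q⁻¹ * (a⁻¹ * q * a) = (q⁻¹ * a⁻¹ * q) * a := by group
      rw [e]
      exact mul_mem h1 ha
    exact Subgroup.mem_inf.mpr ⟨hApart, hQpart⟩
  -- stability: p'-elements of W centralize Q
  have stab : ∀ v ∈ W, Nat.Coprime p (orderOf v) →
      v ∈ Subgroup.centralizer (Q : Set G) := by
    intro v hv hcop
    rw [Subgroup.mem_centralizer_iff]
    intro q hq
    have haQA : q⁻¹ * (v⁻¹ * q * v) ∈ QA := hWKQ hv q hq
    set a := q⁻¹ * (v⁻¹ * q * v) with ha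
    have hcomm : ∀ z ∈ QA, v⁻¹ * z * v = z := by
      intro z hz
      have hc := hWcentQA hv
      rw [Subgroup.mem_centralizer_iff] at hc
      have h1 := hc z hz
      calc v⁻¹ * z * v = v⁻¹ * (z * v) := by group
        _ = v⁻¹ * (v * z) := by rw [h1]
        _ = z := by group
    have key : ∀ k : ℕ, (v⁻¹)^k * q * v^k = q * a^k := by
      intro k
      induction k with
      | zero => simp
      | succ n ih =>
        have e1 : (v⁻¹)^(n+1) * q * v^(n+1) = v⁻¹ * ((v⁻¹)^n * q * v^n) * v := by
          rw [pow_succ' (v⁻¹) n, pow_succ v n]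
          group
        rw [e1, ih]
        have h2 : v⁻¹ * a^n * v = a^n := hcomm _ (pow_mem haQA n)
        have h3 : v⁻¹ * q * v = q * a := by rw [ha]; group
        calc v⁻¹ * (q * a^n) * v = (v⁻¹ * q * v) * (v⁻¹ * a^n * v) := by group
          _ = (q * a) * a^n := by rw [h3, h2]
          _ = q * a^(n+1) := by rw [pow_succ]; group
    have hone : a ^ (orderOf v) = 1 := by
      have hk := key (orderOf v)
      rw [inv_pow, pow_orderOf_eq_one] at hk
      simp only [inv_one, one_mul, mul_one] at hk
      have : q * 1 = q * a ^ orderOf v := by rw [mul_one]; exact hk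
      exact (mul_left_cancel this).symm
    have h5 : orderOf a ∣ orderOf v := orderOf_dvd_of_pow_eq_one hone
    have h4 : ∃ j, orderOf a ∣ p ^ j := by
      have haQ : a ∈ Q := (Subgroup.mem_inf.mp haQA).2
      have hpQ : IsPGroup p Q := S.2.to_le hQS
      obtain ⟨j, hj⟩ := hpQ ⟨a, haQ⟩
      refine ⟨j, orderOf_dvd_of_pow_eq_one ?_⟩
      have := congrArg (Subgroup.subtype Q) hj
      simpa using this
    obtain ⟨j, h4⟩ := h4
    have hcop2 : Nat.Coprime (p ^ j) (orderOf v) := hcop.pow_left j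
    have h6 : orderOf a ∣ Nat.gcd (p ^ j) (orderOf v) := Nat.dvd_gcd h4 h5
    rw [hcop2] at h6
    have h7 : a = 1 := orderOf_eq_one_iff.mp (Nat.dvd_one.mp h6)
    have h8 : v⁻¹ * q * v = q := by
      have : q * a = q * 1 := by rw [h7]
      rw [mul_one] at this
      rw [ha] at this
      calc v⁻¹ * q * v = q * (q⁻¹ * (v⁻¹ * q * v)) := by group
        _ = q := by rw [← ha, this]
    calc q * v = v * (v⁻¹ * q * v) := by group
      _ = v * q := by rw [h8]
  -- every element of W has a p-power power centralizing Q
  have hppow : ∀ w ∈ W, ∃ k : ℕ, w ^ (p ^ k) ∈ Subgroup.centralizer (Q : Set G) := by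
    intro w hw
    have hw0 : orderOf w ≠ 0 := (orderOf_pos w).ne'
    refine ⟨(orderOf w).factorization p, ?_⟩
    apply stab _ (pow_mem hw _)
    rw [orderOf_pow]
    have hdvd : p ^ (orderOf w).factorization p ∣ orderOf w := Nat.ordProj_dvd _ p
    rw [Nat.gcd_comm, Nat.gcd_eq_left hdvd]
    exact Nat.coprime_ordCompl Fact.out hw0
  -- quotient of W by the centralizer is a p-group
  haveI hCn : (Subgroup.centralizer (Q : Set G)).Normal :=
    centralizer_normal_of_invariant (fun x => cnj_normal hQn x)
  set X := (Subgroup.centralizer (Q : Set G)).subgroupOf W with hX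
  haveI hXn : X.Normal := hCn.subgroupOf W
  have hXpq : IsPGroup p (↥W ⧸ X) := by
    intro gbar
    obtain ⟨⟨w, hw⟩, rfl⟩ := QuotientGroup.mk_surjective gbar
    obtain ⟨k, hk⟩ := hppow w hw
    refine ⟨k, ?_⟩
    rw [← QuotientGroup.mk_pow]
    rw [QuotientGroup.eq_one_iff]
    rw [hX, Subgroup.mem_subgroupOf]
    simpa using hk
  -- a Sylow p-subgroup of W containing A
  have hApgrp : IsPGroup p A := S.2.to_le hAS
  have hA' : IsPGroup p (A.subgroupOf W) :=
    hApgrp.of_equiv (Subgroup.subgroupOfEquivOfLe hAW).symm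
  obtain ⟨PW, hPW⟩ := hA'.exists_le_sylow
  set mapPW := (PW : Subgroup ↥W).map W.subtype with hmapPW
  have hAmapPW : A ≤ mapPW := by
    have := Subgroup.map_mono (f := W.subtype) hPW
    rwa [Subgroup.subgroupOf_map_subtype, inf_of_le_left hAW] at this
  have hmapPWp : IsPGroup p mapPW := PW.2.map _
  obtain ⟨R, hR⟩ := hmapPWp.exists_le_sylow
  obtain ⟨z, hz⟩ : ∃ z : G, (R : Subgroup G) = cnj z (S : Subgroup G) := by
    obtain ⟨g0, hg0⟩ := MulAction.exists_smul_eq G S R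
    refine ⟨g0, ?_⟩
    rw [← hg0]
    rfl
  have hAz : cnj z A = A := LWC1 hsc (by rw [← hz]; exact hAmapPW.trans hR)
  have hnormPW : ∀ x ∈ mapPW, cnj x A = A := by
    intro x hx
    have hxz : x ∈ cnj z (S : Subgroup G) := by rw [← hz]; exact hR hx
    have h1 := A_norm hsc hAS hxz
    rwa [hAz] at h1
  -- decomposition of W
  have hnd : ¬ p ∣ (PW : Subgroup ↥W).index := PW.not_dvd_index
  set D := (PW : Subgroup ↥W) ⊔ X with hD
  have hDtop : D = ⊤ := by
    have hD1 : D.index ∣ (PW : Subgroup ↥W).index := Subgroup.index_dvd_of_le le_sup_left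
    have hD2 : D.index ∣ X.index := Subgroup.index_dvd_of_le le_sup_right
    obtain ⟨n, hn⟩ := hXpq.exists_card_eq
    have hXcard : X.index = p ^ n := by rw [Subgroup.index_eq_card]; exact hn
    rw [hXcard] at hD2
    obtain ⟨j, hj, hDj⟩ := (Nat.dvd_prime_pow Fact.out).mp hD2
    rcases Nat.eq_zero_or_pos j with hj0 | hj0
    · rw [hj0, pow_zero] at hDj
      exact Subgroup.index_eq_one.mp hDj
    · exfalso
      apply hnd
      apply dvd_trans _ hD1
      rw [hDj]
      exact dvd_pow_self p hj0.ne'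
  have hWdec : ∀ w ∈ W, ∃ σ c : G, w = σ * c ∧ cnj σ A = A ∧
      c ∈ Subgroup.centralizer (Q : Set G) := by
    intro w hw
    have hmemD : (⟨w, hw⟩ : ↥W) ∈ D := by rw [hDtop]; trivial
    rw [hD, ← SetLike.mem_coe, Subgroup.mul_normal] at hmemD
    obtain ⟨σt, hσt, ct, hct, hσc⟩ := hmemD
    refine ⟨(σt : G), (ct : G), ?_, ?_, ?_⟩
    · have := congrArg (Subgroup.subtype W) hσc
      simpa using this.symm
    · exact hnormPW _ (Subgroup.mem_map.mpr ⟨σt, hσt, rfl⟩)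
    · exact Subgroup.mem_subgroupOf.mp hct
  -- Frattini argument
  have hFrat := Sylow.normalizer_sup_eq_top (p := p) (N := W) PW
  have hgtop : g⁻¹ ∈ (Subgroup.normalizer (((PW : Subgroup ↥W).map W.subtype : Subgroup G) : Set G) ⊔ W : Subgroup G) := by
    rw [hFrat]; trivial
  rw [← SetLike.mem_coe, Subgroup.mul_normal] at hgtop
  obtain ⟨ν, hν, w, hwW, hvw⟩ := hgtop
  obtain ⟨σ, c, hwsc, hσA, hcC⟩ := hWdec w hwW
  have hνA : cnj ν A = A := by
    have h1 : cnj ν mapPW = mapPW := cnj_eq_of_mem_normalizer hν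
    have h2 : cnj ν A ≤ cnj z (S : Subgroup G) := by
      calc cnj ν A ≤ cnj ν mapPW := cnj_mono _ hAmapPW
        _ = mapPW := h1
        _ ≤ (R : Subgroup G) := hR
        _ = cnj z (S : Subgroup G) := hz
    have h3 := LWC hsc h2
    rwa [hAz] at h3
  refine ⟨c⁻¹, inv_mem hcC, ?_⟩
  have hg : g = c⁻¹ * σ⁻¹ * ν⁻¹ := by
    have h1 : g⁻¹ = ν * (σ * c) := by rw [← hwsc]; exact hvw.symm
    have h2 : g = (ν * (σ * c))⁻¹ := by rw [← h1]; simp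
    rw [h2]; group
  rw [hg, ← cnj_cnj, ← cnj_cnj, cnj_fix_inv hνA, cnj_fix_inv hσA]

end Core


lemma map_subtype_cnj {K : Subgroup G} (t : ↥K) (X : Subgroup ↥K) :
    (cnj t X).map K.subtype = cnj (t : G) (X.map K.subtype) := by
  ext x
  rw [mem_cnj]
  simp only [Subgroup.mem_map, Subgroup.coe_subtype]
  constructor
  · rintro ⟨y, hy, rfl⟩
    rw [mem_cnj] at hy
    refine ⟨t⁻¹ * y * t, hy, ?_⟩
    push_cast
    group
  · rintro ⟨y, hy, hyx⟩
    refine ⟨t * y * t⁻¹, ?_, ?_⟩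
    · rw [mem_cnj]
      have e : t⁻¹ * (t * y * t⁻¹) * t = y := by group
      rwa [e]
    · push_cast
      rw [hyx]
      group

lemma card_lt_of_proper [Finite G] {H K : Subgroup G} (hle : H ≤ K) {x : G}
    (hx : x ∈ K) (hnx : x ∉ H) : Nat.card H < Nat.card K := by
  refine lt_of_le_of_ne (Subgroup.card_le_of_le hle) fun h => hnx ?_
  rw [eq_of_le_of_card_eq hle h]
  exact hx

lemma isPGroup_subgroupOf {p : ℕ} {H K : Subgroup G} (h : IsPGroup p H) (hle : H ≤ K) :
    IsPGroup p (H.subgroupOf K) := h.of_equiv (Subgroup.subgroupOfEquivOfLe hle).symm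

lemma card_le_top [Finite G] (H : Subgroup G) : Nat.card H ≤ Nat.card G := by
  have := Subgroup.card_le_of_le (le_top (a := H))
  rwa [Subgroup.card_top] at this

/-- Construction of a "fully normalized position" for `Q` relative to a Sylow position
`cnj x S`. -/
lemma SIDE {p : ℕ} [Fact p.Prime] [Finite G] (S : Sylow p G) {Q : Subgroup G} (x : G)
    (hQx : Q ≤ cnj x ↑S) :
    ∃ (T : Sylow p ↥(Subgroup.normalizer (Q : Set G))) (u : G),
      (cnj x ↑S ⊓ (Subgroup.normalizer (Q : Set G))).subgroupOf (Subgroup.normalizer (Q : Set G)) ≤ T ∧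
      (T : Subgroup ↥(Subgroup.normalizer (Q : Set G))).map (Subgroup.normalizer (Q : Set G)).subtype = cnj u ↑S ⊓ (Subgroup.normalizer (Q : Set G)) := by
  set Hn := (Subgroup.normalizer (Q : Set G)) with hHn
  set W := cnj x ↑S ⊓ Hn with hWdef
  have hWp : IsPGroup p W := (isPGroup_cnj S.2 x).to_le inf_le_left
  obtain ⟨T, hT⟩ := (isPGroup_subgroupOf hWp inf_le_right).exists_le_sylow
  set mapT := (T : Subgroup ↥Hn).map Hn.subtype with hmapT
  have hmapTp : IsPGroup p mapT := T.2.map _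
  obtain ⟨R, hR⟩ := hmapTp.exists_le_sylow
  obtain ⟨u, hu⟩ : ∃ u : G, (R : Subgroup G) = cnj u ↑S := by
    obtain ⟨g0, hg0⟩ := MulAction.exists_smul_eq G S R
    exact ⟨g0, by rw [← hg0]; rfl⟩
  refine ⟨T, u, hT, ?_⟩
  have hmapT_le : mapT ≤ cnj u ↑S ⊓ Hn := by
    refine le_inf ?_ (Subgroup.map_subtype_le _)
    rw [← hu]
    exact hR
  have hX'p : IsPGroup p ((cnj u ↑S ⊓ Hn).subgroupOf Hn) :=
    isPGroup_subgroupOf ((isPGroup_cnj S.2 u).to_le inf_le_left) inf_le_right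
  have hTX' : (T : Subgroup ↥Hn) ≤ (cnj u ↑S ⊓ Hn).subgroupOf Hn := by
    intro t ht
    rw [Subgroup.mem_subgroupOf]
    refine Subgroup.mem_inf.mpr ⟨?_, t.2⟩
    have h1 : (t : G) ∈ mapT := Subgroup.mem_map.mpr ⟨t, ht, rfl⟩
    have h2 := hR h1
    rwa [hu] at h2
  have hX'eq := T.3 hX'p hTX'
  have := congrArg (Subgroup.map Hn.subtype) hX'eq
  rw [Subgroup.subgroupOf_map_subtype, inf_of_le_left inf_le_right] at this
  rw [← hmapT] at this
  exact this.symm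


lemma mem_of_map_subtype {K : Subgroup G} {X : Subgroup ↥K} {y : ↥K}
    (h : (y : G) ∈ X.map K.subtype) : y ∈ X := by
  obtain ⟨z, hz, hzy⟩ := Subgroup.mem_map.mp h
  have : z = y := Subtype.ext hzy
  rwa [← this]

section SCtx2

variable [Finite G] {S A : Subgroup G}
variable (hsc : ∀ u ∈ A, ∀ g : G, g⁻¹ * u * g ∈ S → g⁻¹ * u * g ∈ A)

include hsc

lemma SCmem' {x v w g : G} (hx : x ∈ cnj v A) (hS : g⁻¹ * x * g ∈ cnj w S) :
    g⁻¹ * x * g ∈ cnj w A := by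
  have h1 : g⁻¹ * x * g ∈ cnj (g⁻¹ * v) A := by
    rw [mem_cnj] at hx ⊢
    have e : (g⁻¹*v)⁻¹ * (g⁻¹ * x * g) * (g⁻¹*v) = v⁻¹ * x * v := by group
    rw [e]
    exact hx
  exact SCmem hsc h1 hS

lemma hab_cnj (hab : ∀ u ∈ A, ∀ v ∈ A, Commute u v) (u : G) :
    ∀ x ∈ cnj u A, ∀ y ∈ cnj u A, Commute x y := by
  intro x hx y hy
  obtain ⟨x₀, hx₀, rfl⟩ := mem_cnj'.mp hx
  obtain ⟨y₀, hy₀, rfl⟩ := mem_cnj'.mp hy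
  have h := hab x₀ hx₀ y₀ hy₀
  unfold Commute SemiconjBy at h ⊢
  calc u * x₀ * u⁻¹ * (u * y₀ * u⁻¹) = u * (x₀ * y₀) * u⁻¹ := by group
    _ = u * (y₀ * x₀) * u⁻¹ := by rw [h]
    _ = u * y₀ * u⁻¹ * (u * x₀ * u⁻¹) := by group

end SCtx2

universe u

/-- The main induction: control of fusion for a strongly closed abelian subgroup,
in the "two positions of `Q`" form. -/
theorem MAIN : ∀ (N : ℕ) (G : Type u) [Group G] [Finite G], Nat.card G ≤ N →
    ∀ (p : ℕ) [Fact p.Prime] (S : Sylow p G) (A : Subgroup G),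
    A ≤ (S : Subgroup G) → (∀ u ∈ A, ∀ v ∈ A, Commute u v) →
    (∀ u ∈ A, ∀ g : G, g⁻¹ * u * g ∈ (S : Subgroup G) → g⁻¹ * u * g ∈ A) →
    ∀ (Q : Subgroup G) (a b : G), Q ≤ cnj a ↑S → Q ≤ cnj b ↑S →
    ∃ c ∈ Subgroup.centralizer (Q : Set G), cnj a A = cnj (c⁻¹ * b) A := by
  intro N
  induction N with
  | zero =>
    intro G _ _ hcard
    exfalso
    have : 0 < Nat.card G := Nat.card_pos
    omega
  | succ N ihN =>
    intro G _ _ hcardG p _ S A hAS hab hsc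
    suffices Hmain : ∀ (m : ℕ) (Q : Subgroup G), Nat.card G - Nat.card Q ≤ m →
        ∀ a b, Q ≤ cnj a ↑S → Q ≤ cnj b ↑S →
        ∃ c ∈ Subgroup.centralizer (Q : Set G), cnj a A = cnj (c⁻¹ * b) A by
      intro Q a b h1 h2
      exact Hmain _ Q le_rfl a b h1 h2
    intro m
    induction m using Nat.strong_induction_on with
    | _ m ih =>
    intro Q hQm a b hQa hQb
    by_cases hc0 : cnj a A ≤ Q
    · refine ⟨1, one_mem _, ?_⟩
      rw [inv_one, one_mul]
      exact LWC hsc (le_trans hc0 hQb)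
    by_cases hc0' : cnj b A ≤ Q
    · refine ⟨1, one_mem _, ?_⟩
      rw [inv_one, one_mul]
      exact (LWC hsc (le_trans hc0' hQa)).symm
    by_cases hQn : Q.Normal
    · -- CORE case
      have hQS : Q ≤ (S : Subgroup G) := by
        have h1 : cnj a⁻¹ Q ≤ cnj a⁻¹ (cnj a ↑S) := cnj_mono _ hQa
        rwa [cnj_normal hQn, cnj_cnj, inv_mul_cancel, cnj_one] at h1
      obtain ⟨c₁, hc₁, e₁⟩ := CORE hAS hab hsc hQn hQS a
      obtain ⟨c₂, hc₂, e₂⟩ := CORE hAS hab hsc hQn hQS b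
      refine ⟨c₂ * c₁⁻¹, mul_mem hc₂ (inv_mem hc₁), ?_⟩
      have e3 : (c₂ * c₁⁻¹)⁻¹ * b = (c₁ * c₂⁻¹) * b := by group
      rw [e3, e₁, ← cnj_cnj, e₂, cnj_cnj]
      have e4 : c₁ * c₂⁻¹ * c₂ = c₁ := by group
      rw [e4]
    · -- non-normal case
      set Hn := (Subgroup.normalizer (Q : Set G)) with hHn
      have hQHn : Q ≤ Hn := Subgroup.le_normalizer
      have hHnne : Hn ≠ ⊤ := fun h => hQn (Subgroup.normalizer_eq_top_iff.mp h)
      have hcardHn : Nat.card ↥Hn < Nat.card G := by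
        refine lt_of_le_of_ne (card_le_top Hn) fun h => hHnne ?_
        exact Subgroup.eq_top_of_card_eq (H := Hn) h
      have hWit : ∀ x : G, Q ≤ cnj x ↑S → ¬ (cnj x A ≤ Q) →
          Nat.card Q < Nat.card ↥(cnj x ↑S ⊓ Hn) := by
        intro x hx hnle
        have hnS : ¬ (cnj x ↑S ≤ Q) := fun h => hnle (le_trans (cnj_mono x hAS) h)
        obtain ⟨w, hwS, hwQ, hwN⟩ := PA (isPGroup_cnj S.2 x) le_rfl hx
          (fun y hy => cnj_eq_of_mem_normalizer (Subgroup.le_normalizer hy)) hnS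
        exact card_lt_of_proper (le_inf hx hQHn) (Subgroup.mem_inf.mpr ⟨hwS, hwN⟩) hwQ
      have hW₁card := hWit a hQa hc0
      have hW₂card := hWit b hQb hc0'
      have hQG : Nat.card Q < Nat.card G := lt_of_lt_of_le hW₁card (card_le_top _)
      have inIH : ∀ (Q' : Subgroup G), Nat.card Q < Nat.card Q' →
          ∀ a' b', Q' ≤ cnj a' ↑S → Q' ≤ cnj b' ↑S →
          ∃ c ∈ Subgroup.centralizer (Q' : Set G), cnj a' A = cnj (c⁻¹ * b') A := by
        intro Q' hlt a' b' h1 h2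
        have hm' : Nat.card G - Nat.card Q' < m :=
          lt_of_lt_of_le (Nat.sub_lt_sub_left hQG hlt) hQm
        exact ih _ hm' Q' le_rfl a' b' h1 h2
      obtain ⟨T₁, u₁, hT₁, hmax₁⟩ := SIDE S a hQa
      obtain ⟨T₂, u₂, hT₂, hmax₂⟩ := SIDE S b hQb
      set mapT₁ := (T₁ : Subgroup ↥Hn).map Hn.subtype with hmapT₁def
      set mapT₂ := (T₂ : Subgroup ↥Hn).map Hn.subtype with hmapT₂def
      have hW₁le : cnj a ↑S ⊓ Hn ≤ mapT₁ := by
        have := Subgroup.map_mono (f := Hn.subtype) hT₁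
        rwa [Subgroup.subgroupOf_map_subtype, inf_of_le_left inf_le_right] at this
      have hW₂le : cnj b ↑S ⊓ Hn ≤ mapT₂ := by
        have := Subgroup.map_mono (f := Hn.subtype) hT₂
        rwa [Subgroup.subgroupOf_map_subtype, inf_of_le_left inf_le_right] at this
      have hQmapT₁ : Q ≤ mapT₁ := le_trans (le_inf hQa hQHn) hW₁le
      have hQmapT₂ : Q ≤ mapT₂ := le_trans (le_inf hQb hQHn) hW₂le
      have hmapT₁le : mapT₁ ≤ cnj u₁ ↑S := by rw [hmax₁]; exact inf_le_left
      have hmapT₂le : mapT₂ ≤ cnj u₂ ↑S := by rw [hmax₂]; exact inf_le_left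
      have hQu₁ : Q ≤ cnj u₁ ↑S := le_trans hQmapT₁ hmapT₁le
      have hQu₂ : Q ≤ cnj u₂ ↑S := le_trans hQmapT₂ hmapT₂le
      have hW₁u₁ : cnj a ↑S ⊓ Hn ≤ cnj u₁ ↑S := le_trans hW₁le hmapT₁le
      have hW₂u₂ : cnj b ↑S ⊓ Hn ≤ cnj u₂ ↑S := le_trans hW₂le hmapT₂le
      obtain ⟨c₁, hc₁, e₁⟩ := inIH _ hW₁card a u₁ inf_le_left hW₁u₁
      obtain ⟨c₂, hc₂, e₂⟩ := inIH _ hW₂card b u₂ inf_le_left hW₂u₂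
      have hc₁Q : c₁ ∈ Subgroup.centralizer (Q : Set G) :=
        Subgroup.centralizer_le (SetLike.coe_subset_coe.mpr (le_inf hQa hQHn)) hc₁
      have hc₂Q : c₂ ∈ Subgroup.centralizer (Q : Set G) :=
        Subgroup.centralizer_le (SetLike.coe_subset_coe.mpr (le_inf hQb hQHn)) hc₂
      have MID : ∃ c₀ ∈ Subgroup.centralizer (Q : Set G),
          cnj u₁ A = cnj (c₀⁻¹ * u₂) A := by
        by_cases hmid : cnj u₁ A ≤ Q
        · refine ⟨1, one_mem _, ?_⟩
          rw [inv_one, one_mul]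
          exact LWC hsc (le_trans hmid hQu₂)
        · set B₁ := cnj u₁ A ⊓ Hn with hB₁def
          set B₂ := cnj u₂ A ⊓ Hn with hB₂def
          obtain ⟨wB, hwBA, hwBQ, hwBN⟩ := PA (isPGroup_cnj S.2 u₁) (cnj_mono u₁ hAS) hQu₁
            (fun y hy => A_norm hsc hAS hy) hmid
          have hwB₁ : wB ∈ B₁ := Subgroup.mem_inf.mpr ⟨hwBA, hwBN⟩
          have hB₁mapT₁ : B₁ ≤ mapT₁ := by
            rw [hmax₁]
            exact inf_le_inf_right _ (cnj_mono u₁ hAS)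
          have hB₂mapT₂ : B₂ ≤ mapT₂ := by
            rw [hmax₂]
            exact inf_le_inf_right _ (cnj_mono u₂ hAS)
          obtain ⟨gt, hgt⟩ := MulAction.exists_smul_eq ↥Hn T₁ T₂
          have hmapconj : cnj (gt : G) mapT₁ = mapT₂ := by
            have h1 : cnj gt (T₁ : Subgroup ↥Hn) = (T₂ : Subgroup ↥Hn) := by
              rw [← hgt]; rfl
            rw [hmapT₁def, hmapT₂def, ← h1, map_subtype_cnj]
          -- apply the outer induction hypothesis to Hn
          set B₁' := B₁.subgroupOf Hn with hB₁'def
          have hB₁T₁ : B₁' ≤ (T₁ : Subgroup ↥Hn) := by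
            intro y hy
            rw [hB₁'def, Subgroup.mem_subgroupOf] at hy
            exact mem_of_map_subtype (hB₁mapT₁ hy)
          have hB₁ab : ∀ x ∈ B₁', ∀ y ∈ B₁', Commute x y := by
            intro x hx y hy
            rw [hB₁'def, Subgroup.mem_subgroupOf] at hx hy
            have h := hab_cnj hsc hab u₁ _ (Subgroup.mem_inf.mp hx).1 _
              (Subgroup.mem_inf.mp hy).1
            have h2 : (x : G) * (y : G) = (y : G) * (x : G) := h
            show x * y = y * x
            exact Subtype.ext (by push_cast; exact h2)
          have hB₁sc : ∀ x ∈ B₁', ∀ g : ↥Hn, g⁻¹ * x * g ∈ (T₁ : Subgroup ↥Hn) →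
              g⁻¹ * x * g ∈ B₁' := by
            intro x hx g hgT
            rw [hB₁'def, Subgroup.mem_subgroupOf] at hx ⊢
            have hxA : (x : G) ∈ cnj u₁ A := (Subgroup.mem_inf.mp hx).1
            have hcoeT : ((g⁻¹ * x * g : ↥Hn) : G) ∈ mapT₁ :=
              Subgroup.mem_map.mpr ⟨_, hgT, rfl⟩
            have hcoeS : (g : G)⁻¹ * (x : G) * (g : G) ∈ cnj u₁ ↑S := by
              have := hmapT₁le hcoeT
              push_cast at this
              exact this
            have h1 : (g : G)⁻¹ * (x : G) * (g : G) ∈ cnj u₁ A := SCmem' hsc hxA hcoeS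
            refine Subgroup.mem_inf.mpr ⟨?_, (g⁻¹ * x * g : ↥Hn).2⟩
            push_cast
            exact h1
          have hcardHn' : Nat.card ↥Hn ≤ N := by omega
          have hQ'T₁ : Q.subgroupOf Hn ≤ cnj (1 : ↥Hn) (T₁ : Subgroup ↥Hn) := by
            rw [cnj_one]
            intro y hy
            rw [Subgroup.mem_subgroupOf] at hy
            exact mem_of_map_subtype (hQmapT₁ hy)
          have hQ'gt : Q.subgroupOf Hn ≤ cnj gt (T₁ : Subgroup ↥Hn) := by
            intro y hy
            rw [mem_cnj]
            rw [Subgroup.mem_subgroupOf] at hy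
            have hgtn : (gt : G) ∈ (Subgroup.normalizer (Q : Set G)) := gt.2
            rw [Subgroup.mem_normalizer_iff] at hgtn
            have hyq : (gt : G)⁻¹ * (y : G) * (gt : G) ∈ Q := by
              apply (hgtn ((gt : G)⁻¹ * (y : G) * (gt : G))).mpr
              have e : (gt : G) * ((gt : G)⁻¹ * (y : G) * (gt : G)) * (gt : G)⁻¹ = (y : G) := by
                group
              rw [e]
              exact hy
            have hyq2 : ((gt⁻¹ * y * gt : ↥Hn) : G) ∈ Q := by push_cast; exact hyq
            exact mem_of_map_subtype (hQmapT₁ hyq2)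
          obtain ⟨ct, hct, ect⟩ := ihN ↥Hn hcardHn' p T₁ B₁' hB₁T₁ hB₁ab hB₁sc
            (Q.subgroupOf Hn) gt 1 hQ'gt hQ'T₁
          rw [mul_one] at ect
          set c' := (ct : G) with hc'def
          have hc'Q : c' ∈ Subgroup.centralizer (Q : Set G) := by
            rw [Subgroup.mem_centralizer_iff]
            intro q hq
            have hq' : (⟨q, hQHn hq⟩ : ↥Hn) ∈ Q.subgroupOf Hn := by
              rw [Subgroup.mem_subgroupOf]; exact hq
            have hcomm := Subgroup.mem_centralizer_iff.mp hct _ hq'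
            have := congrArg (fun z : ↥Hn => (z : G)) hcomm
            push_cast at this
            exact this
          have ectG : cnj (gt : G) B₁ = cnj c'⁻¹ B₁ := by
            have h1 := congrArg (Subgroup.map Hn.subtype) ect
            rw [map_subtype_cnj, map_subtype_cnj] at h1
            rw [hB₁'def, Subgroup.subgroupOf_map_subtype, inf_of_le_left inf_le_right] at h1
            rw [show ((ct⁻¹ : ↥Hn) : G) = c'⁻¹ from rfl] at h1
            exact h1
          have hgtHn : cnj (gt : G) Hn = Hn :=
            cnj_eq_of_mem_normalizer (Subgroup.le_normalizer gt.2)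
          have e_gtB₁ : cnj (gt : G) B₁ = cnj ((gt : G) * u₁) A ⊓ Hn := by
            rw [hB₁def, cnj_inf, hgtHn, cnj_cnj]
          have hss1 : cnj (gt : G) B₁ ≤ mapT₂ := by
            rw [← hmapconj]; exact cnj_mono _ hB₁mapT₁
          have hincl1 : cnj (gt : G) B₁ ≤ B₂ := by
            intro y hy
            have hy' := hy
            rw [e_gtB₁] at hy'
            have hyA : y ∈ cnj ((gt : G) * u₁) A := (Subgroup.mem_inf.mp hy').1
            have hyHn : y ∈ Hn := (Subgroup.mem_inf.mp hy').2
            have hyS : y ∈ cnj u₂ ↑S := hmapT₂le (hss1 hy)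
            exact Subgroup.mem_inf.mpr ⟨SCmem hsc hyA hyS, hyHn⟩
          have hincl2 : B₂ ≤ cnj (gt : G) B₁ := by
            intro y hy
            have hyA : y ∈ cnj u₂ A := (Subgroup.mem_inf.mp hy).1
            have hyHn : y ∈ Hn := (Subgroup.mem_inf.mp hy).2
            have hyT₂ : y ∈ mapT₂ := hB₂mapT₂ hy
            have hyS : y ∈ cnj ((gt : G) * u₁) ↑S := by
              rw [← cnj_cnj]
              have h2 : y ∈ cnj (gt : G) mapT₁ := by rw [hmapconj]; exact hyT₂
              exact cnj_mono _ hmapT₁le h2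
            rw [e_gtB₁]
            exact Subgroup.mem_inf.mpr ⟨SCmem hsc hyA hyS, hyHn⟩
          have hB₂c' : B₂ = cnj c'⁻¹ B₁ := by
            rw [le_antisymm hincl2 hincl1, ectG]
          set Q₁' := Q ⊔ B₁ with hQ₁'def
          set Q₂' := Q ⊔ B₂ with hQ₂'def
          have hQ₁'u₁ : Q₁' ≤ cnj u₁ ↑S :=
            sup_le hQu₁ (le_trans inf_le_left (cnj_mono u₁ hAS))
          have hQ₁'card : Nat.card Q < Nat.card Q₁' :=
            card_lt_of_proper le_sup_left (le_sup_right (a := Q) hwB₁) hwBQ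
          have hQc'inv : cnj c'⁻¹ Q = Q := cnj_eq_of_mem_centralizer (inv_mem hc'Q)
          have hQ₂'eq : Q₂' = cnj c'⁻¹ Q₁' := by
            rw [hQ₂'def, hQ₁'def, cnj_sup, hQc'inv, hB₂c']
          have hQ₂'card : Nat.card Q < Nat.card Q₂' := by
            rw [hQ₂'eq, card_cnj]; exact hQ₁'card
          have hQ₂'a : Q₂' ≤ cnj (c'⁻¹ * u₁) ↑S := by
            rw [hQ₂'eq, ← cnj_cnj]
            exact cnj_mono _ hQ₁'u₁
          have hQ₂'b : Q₂' ≤ cnj u₂ ↑S :=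
            sup_le hQu₂ (le_trans inf_le_left (cnj_mono u₂ hAS))
          obtain ⟨c₃, hc₃, e₃⟩ := inIH Q₂' hQ₂'card (c'⁻¹ * u₁) u₂ hQ₂'a hQ₂'b
          have hc₃Q : c₃ ∈ Subgroup.centralizer (Q : Set G) :=
            Subgroup.centralizer_le (SetLike.coe_subset_coe.mpr le_sup_left) hc₃
          refine ⟨c₃ * c'⁻¹, mul_mem hc₃Q (inv_mem hc'Q), ?_⟩
          calc cnj u₁ A = cnj (c' * (c'⁻¹ * u₁)) A := by
                rw [show c' * (c'⁻¹ * u₁) = u₁ by group]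
            _ = cnj c' (cnj (c'⁻¹ * u₁) A) := (cnj_cnj _ _ _).symm
            _ = cnj c' (cnj (c₃⁻¹ * u₂) A) := by rw [e₃]
            _ = cnj ((c₃ * c'⁻¹)⁻¹ * u₂) A := by rw [cnj_cnj]; congr 1; group
      obtain ⟨c₀, hc₀, e₀⟩ := MID
      have push : ∀ (x y z : G), cnj y A = cnj z A → cnj (x*y) A = cnj (x*z) A := by
        intro x y z h
        rw [← cnj_cnj, h, cnj_cnj]
      refine ⟨c₂⁻¹ * c₀ * c₁, mul_mem (mul_mem (inv_mem hc₂Q) hc₀) hc₁Q, ?_⟩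
      have h2 := push c₁⁻¹ _ _ e₀
      have h3 : c₁⁻¹ * (c₀⁻¹ * u₂) = (c₁⁻¹ * c₀⁻¹ * c₂) * (c₂⁻¹ * u₂) := by group
      have h4 := push (c₁⁻¹ * c₀⁻¹ * c₂) _ _ e₂.symm
      have h5 : (c₂⁻¹ * c₀ * c₁)⁻¹ * b = (c₁⁻¹ * c₀⁻¹ * c₂) * b := by group
      rw [e₁, h2, h3, h4, h5]

end CF

/-- If `U ≤ S ∈ Syl_p(G)` is abelian and strongly closed in `S` with respect to
`G`, then `N_G(U)` controls fusion: for `P ≤ S` and `g` with `P^g ≤ S`, there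
is `c ∈ C_G(P^g)` with `U^{gc} = U`. -/
theorem normalizer_controls_fusion
    (G : Type*) [Group G] [Finite G] (p : ℕ) [Fact p.Prime] (S : Sylow p G)
    (U : Subgroup G) (hUS : U ≤ S)
    (hab : ∀ u ∈ U, ∀ v ∈ U, Commute u v)
    (hsc : ∀ u ∈ U, ∀ g : G, g⁻¹ * u * g ∈ (S : Subgroup G) → g⁻¹ * u * g ∈ U) :
    ∀ (P : Subgroup G), P ≤ S → ∀ g : G, (∀ x ∈ P, g⁻¹ * x * g ∈ (S : Subgroup G)) →
      ∃ c ∈ Subgroup.centralizer ((fun x => g⁻¹ * x * g) '' (P : Set G)),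
        (fun x => (g * c)⁻¹ * x * (g * c)) '' (U : Set G) = (U : Set G) := by
  intro P hPS g hg
  set Q := CF.cnj g⁻¹ P with hQdef
  have hset : (Q : Set G) = (fun x => g⁻¹ * x * g) '' (P : Set G) := by
    ext x
    simp only [SetLike.mem_coe, Set.mem_image]
    rw [hQdef, CF.mem_cnj']
    constructor
    · rintro ⟨y, hy, rfl⟩
      exact ⟨y, hy, by group⟩
    · rintro ⟨y, hy, rfl⟩
      exact ⟨y, hy, by group⟩
  have hyp1 : Q ≤ CF.cnj g⁻¹ (S : Subgroup G) := CF.cnj_mono _ hPS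
  have hyp2 : Q ≤ CF.cnj 1 (S : Subgroup G) := by
    rw [CF.cnj_one]
    intro x hx
    rw [hQdef, CF.mem_cnj'] at hx
    obtain ⟨y, hy, rfl⟩ := hx
    have := hg y hy
    have e : g⁻¹ * y * g⁻¹⁻¹ = g⁻¹ * y * g := by rw [inv_inv]
    rwa [e]
  obtain ⟨c, hc, e⟩ := CF.MAIN (Nat.card G) G le_rfl p S U hUS hab hsc Q g⁻¹ 1 hyp1 hyp2
  rw [mul_one] at e
  have hsub : CF.cnj (c * g⁻¹) U = U := by
    rw [← CF.cnj_cnj, e, CF.cnj_cnj, mul_inv_cancel, CF.cnj_one]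
  refine ⟨c⁻¹, ?_, ?_⟩
  · rw [← hset]
    exact inv_mem hc
  · ext x
    simp only [Set.mem_image, SetLike.mem_coe]
    constructor
    · rintro ⟨y, hy, rfl⟩
      have hmem : (g * c⁻¹)⁻¹ * y * (g * c⁻¹) ∈ CF.cnj (c * g⁻¹) U := by
        rw [CF.mem_cnj']
        exact ⟨y, hy, by group⟩
      rwa [hsub] at hmem
    · intro hx
      have hx' : x ∈ CF.cnj (c * g⁻¹) U := by rw [hsub]; exact hx
      rw [CF.mem_cnj'] at hx'
      obtain ⟨y, hy, rfl⟩ := hx'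
      exact ⟨y, hy, by group⟩
end

section
/- Let G be a finite group in which |G : C_G(x)| is odd for every 2-element x, let S be a Sylow 2-subgroup, and set U = Ω₁(S). Then U ≤ Z(S). -/
/-!
Two involutions `x, y` whose product `w = x * y` is a 2-element commute: `x` inverts `w`, so it
normalizes `C(w)`, and if `x ∉ C(w)` it has order 2 in `N(C(w)) / C(w)`, making `|G : C(w)|` even.
An involution `t` normalizing `Ω₁(S)` lies with `Ω₁(S)` in a 2-group, so it commutes with each
generator of `Ω₁(S)`.

A 2-element `s` normalizing a 2-subgroup `A` then centralizes `A`, by induction on its order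
`2 ^ (k + 1)`. By induction `s²`, hence `z = s ^ 2 ^ k`, centralizes `A`, so the 2-group `⟨A, s⟩`
lies in `C(z)`. As `|C(z) : C(s)|` is odd, `⟨A, s⟩` fixes a coset `g C(s)` with `g ∈ C(z)`, i.e.
it centralizes `y = g s g⁻¹`. Now `y` commutes with `s` and `y ^ 2 ^ k = z = s ^ 2 ^ k`, so
`y⁻¹ * s` has smaller order and normalizes `A`; by induction it centralizes `A`, and so does
`s = y * (y⁻¹ * s)`.
-/

open Subgroup

theorem IsPGroup.exists_inv_mul_mul_mem_of_not_dvd_index {p : ℕ} [Fact p.Prime] {H : Type*}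
    [Group H] {K L : Subgroup H} (hK : IsPGroup p K) (hL : ¬p ∣ L.index) :
    ∃ g : H, ∀ k ∈ K, g⁻¹ * k * g ∈ L := by
  obtain ⟨x, hx⟩ :=
    hK.nonempty_fixed_point_of_prime_not_dvd_card (H ⧸ L) (by rwa [← index_eq_card])
  induction x using QuotientGroup.induction_on with | H g => ?_
  refine ⟨g, fun k hk => ?_⟩
  have hfix : ((k⁻¹ * g : H) : H ⧸ L) = g := hx ⟨k⁻¹, inv_mem hk⟩
  simpa [mul_assoc] using QuotientGroup.eq.mp hfix

section

variable {G : Type*} [Group G]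

theorem Subgroup.prime_dvd_index_of_pow_mem {p : ℕ} [Fact p.Prime] {H : Subgroup G} {x : G}
    (hxN : x ∈ normalizer (H : Set G)) (hxH : x ∉ H) (hxp : x ^ p ∈ H) : p ∣ H.index := by
  let N := normalizer (H : Set G)
  have : (H.subgroupOf N).Normal := normal_in_normalizer
  have hx : orderOf (QuotientGroup.mk ⟨x, hxN⟩ : N ⧸ H.subgroupOf N) = p :=
    orderOf_eq_prime (by rwa [← QuotientGroup.mk_pow, QuotientGroup.eq_one_iff, mem_subgroupOf])
      (by rwa [Ne, QuotientGroup.eq_one_iff, mem_subgroupOf])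
  rw [← relIndex_mul_index le_normalizer]
  exact (hx ▸ _root_.orderOf_dvd_natCard _).mul_right _

theorem IsPGroup.zpowers_of_orderOf {p : ℕ} {g : G} (hg : ∃ k : ℕ, orderOf g = p ^ k) :
    IsPGroup p (zpowers g) :=
  let ⟨_, hk⟩ := hg
  IsPGroup.of_card ((Nat.card_zpowers g).trans hk)

def omegaOne (S : Subgroup G) : Subgroup G :=
  closure {x | x ∈ S ∧ x ^ 2 = 1}

theorem omegaOne_le (S : Subgroup G) : omegaOne S ≤ S :=
  closure_le _ |>.mpr fun _ hx => hx.1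

theorem le_normalizer_omegaOne (S : Subgroup G) : S ≤ normalizer (omegaOne S : Set G) :=
  le_normalizer_closure_iff.mpr fun h hh x hx => subset_closure
    ⟨mul_mem (mul_mem hh hx.1) (inv_mem hh), by rw [conj_pow, hx.2, mul_one, mul_inv_cancel]⟩

def OddIndexCentralizers (G : Type*) [Group G] : Prop :=
  ∀ x : G, (∃ n : ℕ, orderOf x = 2 ^ n) → Odd (centralizer {x}).index

namespace OddIndexCentralizers

theorem commute_of_sq_eq_one (hG : OddIndexCentralizers G) {x y : G} (hx : x ^ 2 = 1)
    (hy : y ^ 2 = 1) (hxy : ∃ n : ℕ, orderOf (x * y) = 2 ^ n) : Commute x y := by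
  have hx' : x⁻¹ = x := inv_eq_of_mul_eq_one_right (by rw [← sq, hx])
  have hy' : y⁻¹ = y := inv_eq_of_mul_eq_one_right (by rw [← sq, hy])
  have hconj : x * (x * y)⁻¹ * x⁻¹ = x * y := by
    simp only [mul_inv_rev, hx', hy', mul_assoc, ← sq, hx, mul_one]
  have hN : x ∈ normalizer (centralizer {x * y} : Set G) := by
    refine mem_normalizer_iff.mpr fun h => ?_
    simp only [mem_centralizer_singleton_iff, ← commute_iff_eq]
    nth_rw 2 [← hconj]
    rw [Commute.conj_iff, Commute.inv_right_iff]
  have hxC : x ∈ centralizer {x * y} := by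
    by_contra hxC
    have h2 := prime_dvd_index_of_pow_mem (p := 2) hN hxC (by rw [hx]; exact one_mem _)
    exact Nat.not_even_iff_odd.mpr (hG _ hxy) (even_iff_two_dvd.mpr h2)
  rw [mem_centralizer_singleton_iff] at hxC
  exact mul_left_cancel (hxC.trans (mul_assoc _ _ _))

theorem exists_mem_le_centralizer_conj (hG : OddIndexCentralizers G) {K H : Subgroup G}
    (hK : IsPGroup 2 K) (hKH : K ≤ H) {s : G} (hs : ∃ n : ℕ, orderOf s = 2 ^ n)
    (hsH : centralizer {s} ≤ H) : ∃ g ∈ H, K ≤ centralizer {g * s * g⁻¹} := by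
  have hrel : ¬2 ∣ (centralizer {s}).relIndex H := by
    rw [← even_iff_two_dvd, Nat.not_even_iff_odd]
    exact (Nat.odd_mul.mp (relIndex_mul_index hsH ▸ hG s hs)).1
  obtain ⟨⟨g, hgH⟩, hg⟩ :=
    (hK.comap_subtype (K := H)).exists_inv_mul_mul_mem_of_not_dvd_index hrel
  refine ⟨g, hgH, fun k hk => ?_⟩
  have hks : g⁻¹ * k * g * s = s * (g⁻¹ * k * g) :=
    mem_centralizer_singleton_iff.mp (mem_subgroupOf.mp (hg ⟨k, hKH hk⟩ hk))
  rw [mem_centralizer_singleton_iff]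
  calc k * (g * s * g⁻¹) = g * (g⁻¹ * k * g * s) * g⁻¹ := by group
    _ = g * (s * (g⁻¹ * k * g)) * g⁻¹ := by rw [hks]
    _ = g * s * g⁻¹ * k := by group

theorem exists_commute_pow_eq_of_pow_mem_centralizer (hG : OddIndexCentralizers G)
    {A : Subgroup G} (hA : IsPGroup 2 A) {s : G} (hsN : s ∈ normalizer (A : Set G))
    (hs : ∃ k : ℕ, orderOf s = 2 ^ k) {n : ℕ} (hsn : s ^ n ∈ centralizer A) :
    ∃ y ∈ centralizer A, Commute y s ∧ y ^ n = s ^ n := by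
  have hK : IsPGroup 2 (zpowers s ⊔ A : Subgroup G) :=
    (IsPGroup.zpowers_of_orderOf hs).to_sup_of_normal_right' hA (zpowers_le.mpr hsN)
  have hKz : zpowers s ⊔ A ≤ centralizer {s ^ n} :=
    sup_le (zpowers_le.mpr (mem_centralizer_singleton_iff.mpr (Commute.self_pow s n).eq))
      fun a ha => mem_centralizer_singleton_iff.mpr (mem_centralizer_iff.mp hsn a ha)
  have hsz : centralizer {s} ≤ centralizer {s ^ n} := fun g hg =>
    mem_centralizer_singleton_iff.mpr ((commute_iff_eq _ _).mpr
      (mem_centralizer_singleton_iff.mp hg) |>.pow_right n).eq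
  obtain ⟨g, hgz, hKy⟩ := hG.exists_mem_le_centralizer_conj hK hKz hs hsz
  refine ⟨g * s * g⁻¹, mem_centralizer_iff.mpr fun a ha => ?_, ?_, ?_⟩
  · exact mem_centralizer_singleton_iff.mp (hKy (mem_sup_right ha))
  · exact (mem_centralizer_singleton_iff.mp (hKy (mem_sup_left (mem_zpowers s)))).symm
  · rw [conj_pow, mem_centralizer_singleton_iff.mp hgz, mul_inv_cancel_right]

theorem mem_centralizer_of_mem_normalizer (hG : OddIndexCentralizers G) {A : Subgroup G}
    (hA : IsPGroup 2 A)
    (hinv : ∀ t ∈ normalizer (A : Set G), t ^ 2 = 1 → t ∈ centralizer A) {s : G}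
    (hsN : s ∈ normalizer (A : Set G)) (hs : ∃ k : ℕ, orderOf s = 2 ^ k) :
    s ∈ centralizer A := by
  suffices h : ∀ k : ℕ, ∀ s ∈ normalizer (A : Set G), s ^ 2 ^ (k + 1) = 1 → s ∈ centralizer A by
    obtain ⟨k, hk⟩ := exists_orderOf_eq_prime_pow_iff.mp hs
    exact h k s hsN (by rw [pow_succ, pow_mul, hk, one_pow])
  intro k
  induction k with
  | zero => exact fun s hsN hs => hinv s hsN (by simpa using hs)
  | succ k ih =>
    intro s hsN hs
    have hsq : s ^ 2 ∈ centralizer A :=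
      ih _ (pow_mem hsN 2) (by rwa [← pow_mul, ← pow_succ'])
    have hz : s ^ 2 ^ (k + 1) ∈ centralizer A := by
      rw [pow_succ', pow_mul]
      exact pow_mem hsq _
    obtain ⟨y, hyA, hys, hyz⟩ := hG.exists_commute_pow_eq_of_pow_mem_centralizer hA hsN
      (exists_orderOf_eq_prime_pow_iff.mpr ⟨_, hs⟩) hz
    have hd : y⁻¹ * s ∈ centralizer A :=
      ih _ (mul_mem (inv_mem (centralizer_le_normalizer _ hyA)) hsN)
        (by rw [hys.inv_left.mul_pow, inv_pow, hyz, inv_mul_cancel])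
    simpa using mul_mem hyA hd

theorem mem_centralizer_omegaOne_of_sq_eq_one (hG : OddIndexCentralizers G) {S : Subgroup G}
    (hS : IsPGroup 2 S) {t : G} (htN : t ∈ normalizer (omegaOne S : Set G)) (ht : t ^ 2 = 1) :
    t ∈ centralizer (omegaOne S) := by
  have ht2 : IsPGroup 2 (zpowers t) :=
    IsPGroup.zpowers_of_orderOf (exists_orderOf_eq_prime_pow_iff.mpr ⟨1, ht⟩)
  have hsup : IsPGroup 2 (zpowers t ⊔ omegaOne S : Subgroup G) :=
    ht2.to_sup_of_normal_right' (hS.to_le (omegaOne_le S)) (zpowers_le.mpr htN)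
  rw [omegaOne, centralizer_closure, mem_centralizer_iff]
  intro x hx
  obtain ⟨n, hn⟩ := IsPGroup.iff_orderOf.mp hsup
    ⟨x * t, mul_mem (mem_sup_right (subset_closure hx)) (mem_sup_left (mem_zpowers t))⟩
  exact (hG.commute_of_sq_eq_one hx.2 ht ⟨n, by rwa [orderOf_mk] at hn⟩).eq

theorem le_centralizer_omegaOne (hG : OddIndexCentralizers G) {S : Subgroup G}
    (hS : IsPGroup 2 S) : S ≤ centralizer (omegaOne S) := fun t ht =>
  hG.mem_centralizer_of_mem_normalizer (hS.to_le (omegaOne_le S))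
    (fun _ => hG.mem_centralizer_omegaOne_of_sq_eq_one hS) (le_normalizer_omegaOne S ht)
    (by simpa [orderOf_coe] using IsPGroup.iff_orderOf.mp hS ⟨t, ht⟩)

end OddIndexCentralizers

end

theorem omega1_le_center_general
    (G : Type*) [Group G]
    (hodd : ∀ x : G, (∃ n : ℕ, orderOf x = 2 ^ n) → Odd (Subgroup.centralizer {x}).index)
    (S : Sylow 2 G) :
    Subgroup.closure {x : (S : Subgroup G) | x ^ 2 = 1} ≤
      Subgroup.center (S : Subgroup G) := by
  refine closure_le _ |>.mpr fun x (hx : x ^ 2 = 1) => mem_center_iff.mpr fun t => ?_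
  have hxU : (x : G) ∈ omegaOne (S : Subgroup G) :=
    subset_closure ⟨x.2, by simpa using congrArg Subtype.val hx⟩
  have htC : (t : G) ∈ centralizer (omegaOne (S : Subgroup G)) :=
    OddIndexCentralizers.le_centralizer_omegaOne hodd S.isPGroup' t.2
  exact Subtype.ext (mem_centralizer_iff.mp htC _ hxU).symm

/-- If `|G : C_G(x)|` is odd for every 2-element `x` of a finite group `G` and
`S` is a Sylow 2-subgroup, then `Ω₁(S) ≤ Z(S)`. -/
theorem omega1_le_center
    (G : Type*) [Group G] [Finite G]
    (hodd : ∀ x : G, (∃ n : ℕ, orderOf x = 2 ^ n) → Odd (Subgroup.centralizer {x}).index)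
    (S : Sylow 2 G) :
    Subgroup.closure {x : (S : Subgroup G) | x ^ 2 = 1} ≤
      Subgroup.center (S : Subgroup G) :=
  omega1_le_center_general G hodd S
end

section
/- Let G be a finite group and S a Sylow 2-subgroup. If every element of S is G-conjugate to an element of Z(S), then N_S(⟨x⟩) = C_S(x) for every x ∈ S. -/
/-!
If `g⁻¹ x g ∈ Z(S)`, then `x` is central in the Sylow subgroup `T = gSg⁻¹`, so `T ≤ C_G(x)`.
As `C_G(x)` is normal in `N_G(⟨x⟩)` and contains its Sylow subgroup `T`, Sylow's theorem puts
every 2-subgroup of `N_G(⟨x⟩)` inside `C_G(x)`, in particular `N_S(⟨x⟩)`.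
-/

open Subgroup Pointwise

namespace Subgroup

variable {G : Type*} [Group G]

theorem centralizer_zpowers (z : G) : centralizer (zpowers z : Set G) = centralizer {z} := by
  rw [zpowers_eq_closure, centralizer_closure]

theorem mem_centralizer_conj_smul {H : Subgroup G} {g x : G}
    (hx : g⁻¹ * x * g ∈ centralizer (H : Set G)) :
    x ∈ centralizer ((MulAut.conj g • H : Subgroup G) : Set G) := by
  rintro - ⟨t, ht, rfl⟩
  have := (show Commute t (g⁻¹ * x * g) from hx t ht).conj g
  simpa [MulAut.conj_apply, mul_assoc] using this.eq

end Subgroup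

namespace IsPGroup

variable {G : Type*} [Group G] [Finite G] {p : ℕ} [Fact p.Prime]

theorem exists_le_smul_sylow_of_le {Q H : Subgroup G} (hQ : IsPGroup p Q) (hQH : Q ≤ H)
    (P : Sylow p G) (hPH : (P : Subgroup G) ≤ H) : ∃ h ∈ H, Q ≤ (h • P : Sylow p G) := by
  obtain ⟨R, hQR⟩ := (hQ.comap_subtype (K := H)).exists_le_sylow
  obtain ⟨h, rfl⟩ := MulAction.exists_smul_eq H (P.subtype hPH) R
  refine ⟨h, h.2, fun q hq => ?_⟩
  have := @hQR ⟨q, hQH hq⟩ hq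
  rwa [Sylow.smul_subtype, Sylow.coe_subtype, mem_subgroupOf] at this

theorem le_of_le_normalizer {Q K : Subgroup G} (hQ : IsPGroup p Q)
    (hQK : Q ≤ normalizer (K : Set G)) (P : Sylow p G) (hPK : (P : Subgroup G) ≤ K) : Q ≤ K := by
  obtain ⟨h, hh, hQP⟩ := hQ.exists_le_smul_sylow_of_le hQK P (hPK.trans le_normalizer)
  intro q hq
  have hq' : h⁻¹ * q * h ∈ K := by
    have := hQP hq
    rw [Sylow.coe_subgroup_smul, mem_pointwise_smul_iff_inv_smul_mem] at this
    simpa [MulAut.conj_apply] using hPK this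
  exact (mem_normalizer_iff''.mp hh q).mpr hq'

theorem le_centralizer_of_le_normalizer_zpowers {Q : Subgroup G} (hQ : IsPGroup p Q)
    {z : G} (hQz : Q ≤ normalizer (zpowers z : Set G)) (P : Sylow p G)
    (hz : z ∈ centralizer ((P : Subgroup G) : Set G)) : Q ≤ centralizer {z} := by
  rw [← centralizer_zpowers]
  refine hQ.le_of_le_normalizer (hQz.trans (le_normalizer_of_normal_subgroupOf
    (centralizer_le_normalizer _))) P ?_
  rwa [le_centralizer_iff, zpowers_le]

end IsPGroup

/-- If every element of a Sylow 2-subgroup `S` of `G` is `G`-conjugate to an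
element of `Z(S)`, then `N_S(⟨x⟩) = C_S(x)` for every `x ∈ S`. -/
theorem normalizer_eq_centralizer_of_fusion
    (G : Type*) [Group G] [Finite G] (S : Sylow 2 G)
    (hfus : ∀ x ∈ (S : Subgroup G), ∃ g : G,
      g⁻¹ * x * g ∈ Subgroup.centralizer ((S : Subgroup G) : Set G) ⊓ S) :
    ∀ x ∈ (S : Subgroup G),
      Subgroup.normalizer ((Subgroup.zpowers x : Subgroup G) : Set G) ⊓ (S : Subgroup G) =
        Subgroup.centralizer {x} ⊓ (S : Subgroup G) := by
  intro x hx
  obtain ⟨g, hg⟩ := hfus x hx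
  have hxT : x ∈ centralizer (((g • S : Sylow 2 G) : Subgroup G) : Set G) :=
    mem_centralizer_conj_smul (mem_inf.mp hg).1
  refine le_antisymm (le_inf ?_ inf_le_right) (inf_le_inf_right _ ?_)
  · exact (S.isPGroup'.to_le inf_le_right).le_centralizer_of_le_normalizer_zpowers inf_le_left
      (g • S) hxT
  · rw [← centralizer_zpowers]
    exact centralizer_le_normalizer _
end
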